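/- Let F_q have characteristic p > 3 and let s ≥ 1. Then for every x in F_q, 2^{p^s}·D_{p^s,k}(1,x) + k − 2 = k·(1−4x)^{(p^s−1)/2}. -/

import Mathlib

/-! If `ω² = 1 - 4x`, the recurrence `Dₙ₊₂ = Dₙ₊₁ - x Dₙ` makes `aₙ = 2ⁿ Dₙ` satisfy
`aₙ₊₂ = 2 aₙ₊₁ - (1 - ω²) aₙ`, whose characteristic roots are `1 ± ω`; matching `a₀ = 2 - k` and
`a₁ = 2` gives `aₙ = (2 - k) re (1 + ω)ⁿ + k im (1 + ω)ⁿ`. In characteristic `p` the Frobenius gives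
`(1 + ω)^(p^s) = 1 + ω^(p^s) = 1 + (1 - 4x)^((p^s - 1)/2) ω`, since `p^s` is odd.

The recurrence itself comes from Pascal's rule after writing
`D_{n+1,k} = (2 - k) D_{n+1,1} + (k - 1) D_{n,1}`. -/

open Finset

/-- The `n`-th reversed Dickson polynomial of the `(k+1)`-th kind, evaluated at `(a, x)`.
For `n ≥ 1` it is `∑_{i=0}^{⌊n/2⌋} ((n-ki)/(n-i))·C(n-i,i)·(-x)^i·a^{n-2i}`, where the
integer coefficient `((n-ki)/(n-i))·C(n-i,i)` is written as
`k·C(n-i,i) - (k-1)·(n/(n-i))·C(n-i,i)` and `(n/(n-i))·C(n-i,i) = C(n-i,i) + C(n-i-1,i-1)`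
(equal to `1` when `i = 0`). For `n = 0` it is `2 - k`. -/
noncomputable def revDickson {F : Type*} [Field F] (k : ℤ) (n : ℕ) (a x : F) : F :=
  if n = 0 then ((2 - k : ℤ) : F) else
    ∑ i ∈ Finset.range (n / 2 + 1),
      ((k * ((n - i).choose i : ℤ) -
          (k - 1) * (if i = 0 then 1 else ((n - i).choose i : ℤ) + ((n - i - 1).choose (i - 1) : ℤ))) : F)
        * (-x) ^ i * a ^ (n - 2 * i)


open QuadraticAlgebra

section RevDickson

variable {F : Type*} [Field F]

theorem sum_range_choose_sub_mul_eq_of_le (n : ℕ) {L : ℕ} (hL : n / 2 + 1 ≤ L) (f : ℕ → F) :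
    ∑ i ∈ range L, ((n - i).choose i : F) * f i =
      ∑ i ∈ range (n / 2 + 1), ((n - i).choose i : F) * f i := by
  refine (sum_subset (range_subset_range.2 hL) fun i _ hi => ?_).symm
  rw [Nat.choose_eq_zero_of_lt (by simp only [mem_range] at hi; omega), Nat.cast_zero, zero_mul]

theorem revDickson_zero (k : ℤ) (a x : F) : revDickson k 0 a x = ((2 - k : ℤ) : F) := rfl

theorem revDickson_one (k : ℤ) (a x : F) : revDickson k 1 a x = a := by
  simp [revDickson]

theorem revDickson_second_kind_eq_sum (x : F) (n : ℕ) {L : ℕ} (hL : n / 2 + 1 ≤ L) :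
    revDickson 1 n 1 x = ∑ i ∈ range L, ((n - i).choose i : F) * (-x) ^ i := by
  rw [sum_range_choose_sub_mul_eq_of_le n hL]
  rcases n.eq_zero_or_pos with rfl | hn
  · simp [revDickson_zero]
  · simp [revDickson, hn.ne']

theorem revDickson_second_kind_add_two (x : F) (n : ℕ) :
    revDickson 1 (n + 2) 1 x = revDickson 1 (n + 1) 1 x - x * revDickson 1 n 1 x := by
  rw [revDickson_second_kind_eq_sum x (n + 2) (L := n + 2) (by omega),
    revDickson_second_kind_eq_sum x (n + 1) (L := n + 2) (by omega),
    revDickson_second_kind_eq_sum x n (L := n + 1) (by omega), sum_range_succ' _ (n + 1),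
    sum_range_succ' _ (n + 1), mul_sum, add_sub_right_comm, ← sum_sub_distrib]
  congr 1
  refine sum_congr rfl fun i hi => ?_
  rw [mem_range] at hi
  rw [show n + 2 - (i + 1) = n - i + 1 by omega, show n + 1 - (i + 1) = n - i by omega,
    Nat.choose_succ_succ', Nat.cast_add]
  ring

theorem revDickson_succ_eq_second_kind (k : ℤ) (x : F) (n : ℕ) :
    revDickson k (n + 1) 1 x =
      (2 - k) * revDickson 1 (n + 1) 1 x + (k - 1) * revDickson 1 n 1 x := by
  rw [revDickson_second_kind_eq_sum x (n + 1) le_rfl,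
    revDickson_second_kind_eq_sum x n (L := (n + 1) / 2 + 1) (by omega), revDickson,
    if_neg n.succ_ne_zero, mul_sum, mul_sum, ← sum_add_distrib]
  refine sum_congr rfl fun i hi => ?_
  rw [mem_range] at hi
  rcases i with _ | j
  · simp only [tsub_zero, Nat.choose_zero_right, Nat.cast_one, Int.cast_one, mul_one, ↓reduceIte,
      sub_sub_cancel, pow_zero, one_pow]
    ring
  · have hpascal : (n - j).choose (j + 1) = (n - j - 1).choose j + (n - j - 1).choose (j + 1) := by
      rw [show n - j = n - j - 1 + 1 by omega, Nat.choose_succ_succ', Nat.add_sub_cancel]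
    rw [if_neg j.succ_ne_zero, show n + 1 - (j + 1) = n - j by omega, Nat.add_sub_cancel,
      show n - (j + 1) = n - j - 1 by omega, hpascal]
    push_cast
    ring

theorem revDickson_add_two (k : ℤ) (x : F) (n : ℕ) :
    revDickson k (n + 2) 1 x = revDickson k (n + 1) 1 x - x * revDickson k n 1 x := by
  rcases n with _ | n
  · rw [revDickson_succ_eq_second_kind k x 1, revDickson_second_kind_add_two, revDickson_one,
      revDickson_one, revDickson_zero, revDickson_zero]
    push_cast
    ring
  · rw [revDickson_succ_eq_second_kind k x (n + 2), revDickson_succ_eq_second_kind k x (n + 1),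
      revDickson_succ_eq_second_kind k x n, revDickson_second_kind_add_two x (n + 1),
      revDickson_second_kind_add_two x n]
    ring

end RevDickson

theorem QuadraticAlgebra.omega_pow_two_mul_add_one {R : Type*} [CommRing R] (a : R) (m : ℕ) :
    (ω : QuadraticAlgebra R a 0) ^ (2 * m + 1) = ⟨0, a ^ m⟩ := by
  rw [pow_succ, pow_mul, sq, omega_mul_omega_eq_mk, ← algebraMap_eq, ← map_pow,
    algebraMap_eq]
  ext <;> simp

theorem QuadraticAlgebra.one_add_omega_pow_char_pow {R : Type*} [CommRing R] {p : ℕ}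
    [Fact p.Prime] [CharP R p] (hp : Odd p) (a : R) (s : ℕ) :
    (1 + ω : QuadraticAlgebra R a 0) ^ p ^ s = ⟨1, a ^ ((p ^ s - 1) / 2)⟩ := by
  have : CharP (QuadraticAlgebra R a 0) p := charP_of_injective_algebraMap algebraMap_injective p
  obtain ⟨m, hm⟩ := hp.pow (n := s)
  rw [add_pow_char_pow, one_pow, hm, omega_pow_two_mul_add_one, Nat.add_sub_cancel,
    Nat.mul_div_cancel_left m two_pos]
  ext <;> simp

theorem two_pow_mul_revDickson {F : Type*} [Field F] (k : ℤ) (x : F) (n : ℕ) :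
    2 ^ n * revDickson k n 1 x =
      (2 - k) * ((1 + ω : QuadraticAlgebra F (1 - 4 * x) 0) ^ n).re +
        k * ((1 + ω : QuadraticAlgebra F (1 - 4 * x) 0) ^ n).im := by
  induction n using Nat.twoStepInduction with
  | zero => simp [revDickson_zero]
  | one => simp [revDickson_one]
  | more n ih₀ ih₁ =>
    set z : QuadraticAlgebra F (1 - 4 * x) 0 := 1 + ω
    rw [pow_succ z (n + 1), pow_succ z n] at *
    simp only [re_mul, im_mul, z, re_add, im_add, re_one, im_one, omega_re, omega_im] at *
    rw [revDickson_add_two]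
    linear_combination 2 * ih₁ - 4 * x * ih₀

theorem stmt_9_general {F : Type*} [Field F] {p : ℕ} [CharP F p]
    (hp : p.Prime) (h3 : 3 < p) (k : ℤ) (s : ℕ) (x : F) :
    2 ^ (p ^ s) * revDickson k (p ^ s) 1 x + (k : F) - 2 =
      (k : F) * (1 - 4 * x) ^ ((p ^ s - 1) / 2) := by
  have : Fact p.Prime := ⟨hp⟩
  rw [two_pow_mul_revDickson, one_add_omega_pow_char_pow (hp.odd_of_ne_two (by omega))]
  ring

theorem stmt_9 {F : Type*} [Field F] [Fintype F] {p : ℕ} [CharP F p]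
    (hp : p.Prime) (h3 : 3 < p) (k : ℤ) (s : ℕ) (hs : 1 ≤ s) (x : F) :
    2 ^ (p ^ s) * revDickson k (p ^ s) 1 x + (k : F) - 2 =
      (k : F) * (1 - 4 * x) ^ ((p ^ s - 1) / 2) :=
  stmt_9_general hp h3 k s x
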